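/- arXiv:2009.12242 — 2 statements merged into one kernel-verified Lean document; each statement's English description precedes it below -/
import Mathlib

section
/- Let n ∈ ℕ, α ∈ (0,1], and μ, ν, c ∈ ℝ with c not a nonpositive integer. For x > 0 with |x^α| < 1, the recursion formula ₂F₁(μ+n, ν; c; x^α) = Σ_{k=0}^{n} C(n,k) · ((ν)_k/(c)_k) · x^{αk} · ₂F₁(μ+k, ν+k; c+k; x^α) holds, where C(n,k) is the binomial coefficient. -/
open scoped Real BigOperators

noncomputable def poch (b : ℝ) (n : ℕ) : ℝ := (ascPochhammer ℝ n).eval b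

noncomputable def F21 (μ ν c z : ℝ) : ℝ :=
  ∑' n : ℕ, poch μ n * poch ν n / (poch c n * (n.factorial : ℝ)) * z ^ n

noncomputable def confD (α : ℝ) (f : ℝ → ℝ) : ℝ → ℝ :=
  fun x => x ^ (1 - α) * deriv f x

noncomputable def theta (α : ℝ) (f : ℝ → ℝ) : ℝ → ℝ :=
  fun x => (1 / α) * x ^ α * confD α f x

/-!
Termwise one checks the contiguous relation
`F(μ+1, ν; c; z) - F(μ, ν; c; z) = (ν / c) z F(μ+1, ν+1; c+1; z)`.
Hence, as functions of `μ`, the summands `A_k(μ) = (ν)_k / (c)_k z^k F(μ+k, ν+k; c+k; z)`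
satisfy `Δ A_k = A_{k+1}` for the forward difference `Δ` of step `1`, so `Δ^k A_0 = A_k`, and the
formula is the Gregory–Newton expansion `A_0(μ + n) = ∑_k C(n,k) Δ^k A_0(μ)`.
-/

open Filter Topology fwdDiff

lemma poch_zero (b : ℝ) : poch b 0 = 1 := by simp [poch]

lemma poch_succ_right (b : ℝ) (n : ℕ) : poch b (n + 1) = poch b n * (b + n) :=
  ascPochhammer_succ_eval n b

lemma poch_succ_left (b : ℝ) (n : ℕ) : poch b (n + 1) = b * poch (b + 1) n := by
  simp [poch, ascPochhammer_succ_left, Polynomial.eval_comp]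

noncomputable def f21Term (μ ν c z : ℝ) (m : ℕ) : ℝ :=
  poch μ m * poch ν m / (poch c m * m.factorial) * z ^ m

lemma F21_eq_tsum (μ ν c z : ℝ) : F21 μ ν c z = ∑' m, f21Term μ ν c z m := rfl

lemma f21Term_succ (μ ν c z : ℝ) (m : ℕ) :
    f21Term μ ν c z (m + 1)
      = f21Term μ ν c z m * ((μ + m) * (ν + m) / ((c + m) * (m + 1)) * z) := by
  simp only [f21Term, poch_succ_right, Nat.factorial_succ, pow_succ]
  push_cast
  simp only [div_eq_mul_inv, mul_inv]
  ring

lemma tendsto_f21Term_ratio (μ ν c : ℝ) :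
    Tendsto (fun m : ℕ => (μ + m) * (ν + m) / ((c + m) * (m + 1))) atTop (𝓝 1) := by
  have hμ := tendsto_add_mul_div_add_mul_atTop_nhds μ c 1 one_ne_zero
  have hν := tendsto_add_mul_div_add_mul_atTop_nhds ν 1 1 one_ne_zero
  simpa [mul_div_mul_comm, add_comm (1 : ℝ)] using hμ.mul hν

lemma summable_f21Term (μ ν c : ℝ) {z : ℝ} (hz : |z| < 1) : Summable (f21Term μ ν c z) := by
  obtain ⟨r, hzr, hr1⟩ := exists_between hz
  have hratio : ∀ᶠ m : ℕ in atTop, |(μ + m) * (ν + m) / ((c + m) * (m + 1)) * z| ≤ r := by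
    have h := ((tendsto_f21Term_ratio μ ν c).mul_const z).abs
    rw [one_mul] at h
    exact h.eventually (eventually_le_nhds hzr)
  refine summable_of_ratio_norm_eventually_le hr1 ?_
  filter_upwards [hratio] with m hm
  rw [f21Term_succ, norm_mul, mul_comm r, Real.norm_eq_abs (_ * z)]
  exact mul_le_mul_of_nonneg_left hm (norm_nonneg _)

lemma f21Term_add_one_sub_succ (μ ν c z : ℝ) (m : ℕ) :
    f21Term (μ + 1) ν c z (m + 1) - f21Term μ ν c z (m + 1)
      = ν / c * z * f21Term (μ + 1) (ν + 1) (c + 1) z m := by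
  have hm : (m + 1 : ℝ) ≠ 0 := by positivity
  simp only [f21Term, poch_succ_left μ, poch_succ_left ν, poch_succ_left c,
    poch_succ_right (μ + 1), Nat.factorial_succ, pow_succ]
  push_cast
  field_simp
  ring

lemma F21_add_one_sub (μ ν c : ℝ) {z : ℝ} (hz : |z| < 1) :
    F21 (μ + 1) ν c z - F21 μ ν c z = ν / c * z * F21 (μ + 1) (ν + 1) (c + 1) z := by
  have h₁ := summable_f21Term (μ + 1) ν c hz
  have h₀ := summable_f21Term μ ν c hz
  rw [F21_eq_tsum, F21_eq_tsum, F21_eq_tsum, ← h₁.tsum_sub h₀,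
    (h₁.sub h₀).tsum_eq_zero_add, ← tsum_mul_left]
  simp only [f21Term_add_one_sub_succ]
  simp [f21Term, poch_zero]

section GregoryNewton

variable (ν c z : ℝ)

noncomputable def f21Shift (k : ℕ) (μ : ℝ) : ℝ :=
  poch ν k / poch c k * z ^ k * F21 (μ + k) (ν + k) (c + k) z

variable {z}

lemma fwdDiff_f21Shift (hz : |z| < 1) (k : ℕ) :
    Δ_[1] (f21Shift ν c z k) = f21Shift ν c z (k + 1) := by
  funext μ
  simp only [fwdDiff, f21Shift, poch_succ_right, pow_succ, Nat.cast_succ, ← add_assoc,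
    add_right_comm μ 1, ← mul_sub, F21_add_one_sub _ _ _ hz]
  simp only [div_eq_mul_inv, mul_inv]
  ring

lemma fwdDiff_iter_f21Shift_zero (hz : |z| < 1) (k : ℕ) :
    (Δ_[1])^[k] (f21Shift ν c z 0) = f21Shift ν c z k := by
  induction k with
  | zero => rfl
  | succ k ih => rw [Function.iterate_succ_apply', ih, fwdDiff_f21Shift ν c hz]

end GregoryNewton

theorem F21_add_natCast_eq_sum (μ ν c : ℝ) {z : ℝ} (hz : |z| < 1) (n : ℕ) :
    F21 (μ + n) ν c z = ∑ k ∈ Finset.range (n + 1),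
      (n.choose k : ℝ) * (poch ν k / poch c k) * z ^ k * F21 (μ + k) (ν + k) (c + k) z := by
  have h := shift_eq_sum_fwdDiff_iter 1 (f21Shift ν c z 0) n μ
  simpa [fwdDiff_iter_f21Shift_zero ν c hz, f21Shift, poch_zero, mul_assoc] using h

theorem stmt17_general (n : ℕ) (α : ℝ) (μ ν c : ℝ)
    (x : ℝ) (hx : 0 < x) (hx1 : |x ^ α| < 1) :
    F21 (μ + n) ν c (x ^ α)
      = ∑ k ∈ Finset.range (n + 1),
          (n.choose k : ℝ) * (poch ν k / poch c k) * x ^ (α * k)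
            * F21 (μ + k) (ν + k) (c + k) (x ^ α) := by
  have hpow (k : ℕ) : x ^ (α * k) = (x ^ α) ^ k := by
    rw [Real.rpow_mul hx.le, Real.rpow_natCast]
  simp only [hpow]
  exact F21_add_natCast_eq_sum μ ν c hx1 n

theorem stmt17 (n : ℕ) (α : ℝ) (hα : α ∈ Set.Ioc (0:ℝ) 1) (μ ν c : ℝ)
    (hc : ∀ k : ℕ, c ≠ -(k : ℝ)) (x : ℝ) (hx : 0 < x) (hx1 : |x ^ α| < 1) :
    F21 (μ + n) ν c (x ^ α)
      = ∑ k ∈ Finset.range (n + 1),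
          (n.choose k : ℝ) * (poch ν k / poch c k) * x ^ (α * k)
            * F21 (μ + k) (ν + k) (c + k) (x ^ α) :=
  stmt17_general n α μ ν c x hx hx1
end

section
/- Let α ∈ (0,1], a ∈ ℝ, n ∈ ℕ, and s > 0 with (α a / s)^2 < 1. Then the conformable fractional Laplace transform L_α[t^{αn} sin(a t^α)](s) = ∫_0^∞ e^{−s t^α/α} t^{αn} sin(a t^α) t^{α−1} dt equals (a α^{n+1} Γ(n+2)/s^{n+2}) · ₂F₁((n+2)/2, (n+3)/2; 3/2; −(α a/s)^2). -/
open scoped Real BigOperators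

/-!
The substitution `u = t ^ α` turns the transform into `α⁻¹ ∫₀^∞ e^{-(s/α) u} uⁿ sin (a u) du`.
Expanding `sin` in its power series and integrating term by term (legitimate because
`|a| < s / α`, which makes the series of absolute integrals a subseries of the binomial series
`∑ (m+n choose n) (|a| α / s)^m`) gives `∑ₖ (-1)ᵏ a^{2k+1} (n+2k+1)! / ((2k+1)! (s/α)^{n+2k+2})`.
The duplication formula `(b)_{2k} = 4ᵏ (b/2)_k ((b+1)/2)_k` for Pochhammer symbols rewrites
`(n+2k+1)! / (2k+1)!` as `(n+1)! ((n+2)/2)_k ((n+3)/2)_k / ((3/2)_k k!)`, which is the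
hypergeometric coefficient.
-/

open MeasureTheory Set Nat

lemma poch_succ (b : ℝ) (k : ℕ) : poch b (k + 1) = poch b k * (b + k) := by
  simp [poch, ascPochhammer_succ_eval]

lemma poch_pos {b : ℝ} (hb : 0 < b) (k : ℕ) : 0 < poch b k :=
  ascPochhammer_pos k b hb

lemma poch_two_mul (b : ℝ) (k : ℕ) :
    poch b (2 * k) = 4 ^ k * poch (b / 2) k * poch ((b + 1) / 2) k := by
  induction k with
  | zero => simp [poch]
  | succ k ih =>
    rw [show 2 * (k + 1) = 2 * k + 1 + 1 by ring, poch_succ, poch_succ, ih, poch_succ, poch_succ]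
    push_cast
    ring

lemma factorial_div_factorial_eq_poch (n k : ℕ) :
    ((n + 2 * k + 1)! : ℝ) / (2 * k + 1)! =
      (n + 1)! * (poch ((n + 2) / 2) k * poch ((n + 3) / 2) k) / (poch (3 / 2) k * k !) := by
  have hnum : ((n + 2 * k + 1)! : ℝ) =
      (n + 1)! * (4 ^ k * poch ((n + 2) / 2) k * poch ((n + 3) / 2) k) := by
    rw [add_right_comm, ← factorial_mul_ascPochhammer ℝ (n + 1) (2 * k), ← poch,
      show ((n + 1 : ℕ) : ℝ) + 1 = n + 2 by push_cast; ring, poch_two_mul,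
      show (n : ℝ) + 2 + 1 = n + 3 by ring]
  have hden : ((2 * k + 1)! : ℝ) = 4 ^ k * k ! * poch (3 / 2) k := by
    have hone : poch 1 k = k ! := by simp [poch]
    rw [add_comm, ← factorial_mul_ascPochhammer ℝ 1 (2 * k), ← poch, poch_two_mul]
    norm_num [hone]
  have hpoch := poch_pos (by norm_num : (0 : ℝ) < 3 / 2) k
  rw [hnum, hden]
  field_simp

lemma integrableOn_pow_mul_exp_neg_mul_Ioi {c : ℝ} (hc : 0 < c) (m : ℕ) :
    IntegrableOn (fun u : ℝ => u ^ m * Real.exp (-(c * u))) (Ioi 0) := by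
  have h := integrableOn_rpow_mul_exp_neg_mul_rpow
    (show (-1 : ℝ) < m by linarith [(m.cast_nonneg : (0 : ℝ) ≤ m)]) zero_lt_one hc
  refine h.congr_fun (fun u _ => ?_) measurableSet_Ioi
  simp [Real.rpow_natCast]

lemma integral_pow_mul_exp_neg_mul_Ioi {c : ℝ} (hc : 0 < c) (m : ℕ) :
    ∫ u in Ioi 0, u ^ m * Real.exp (-(c * u)) = m ! / c ^ (m + 1) := by
  have h := Real.integral_rpow_mul_exp_neg_mul_Ioi (a := m + 1) (by positivity) hc
  rw [Real.Gamma_nat_eq_factorial, add_sub_cancel_right,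
    show ((m : ℝ) + 1) = ((m + 1 : ℕ) : ℝ) by push_cast; ring, Real.rpow_natCast] at h
  simp_rw [Real.rpow_natCast] at h
  rw [h, one_div_pow]
  ring

lemma summable_pow_div_factorial_mul_factorial_div_pow {x c : ℝ} (hx : 0 ≤ x) (h : x < c)
    (n : ℕ) :
    Summable fun k : ℕ =>
      x ^ (2 * k + 1) / (2 * k + 1)! * ((n + 2 * k + 1)! / c ^ (n + 2 * k + 2)) := by
  have hc : 0 < c := hx.trans_lt h
  have hr : ‖x / c‖ < 1 := by
    rw [Real.norm_of_nonneg (by positivity), div_lt_one hc]; exact h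
  have hodd := (summable_choose_mul_geometric_of_norm_lt_one n hr).comp_injective
    (fun i j hij => by simp only at hij; omega : Function.Injective fun k : ℕ => 2 * k + 1)
  refine (hodd.mul_left (n ! / c ^ (n + 1))).congr fun k => ?_
  rw [Function.comp_apply, show n + 2 * k + 1 = 2 * k + 1 + n by ring,
    ← add_choose_mul_factorial_mul_factorial (2 * k + 1) n, div_pow, show n + 2 * k + 2 = n + 1 + (2 * k + 1) by ring, pow_add _ (n + 1)]
  push_cast
  field_simp

theorem hasSum_integral_exp_neg_mul_mul_pow_mul_sin {a c : ℝ} (h : |a| < c) (n : ℕ) :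
    HasSum (fun k : ℕ => (-1) ^ k * a ^ (2 * k + 1) / (2 * k + 1)! *
        ((n + 2 * k + 1)! / c ^ (n + 2 * k + 2)))
      (∫ u in Ioi 0, Real.exp (-(c * u)) * (u ^ n * Real.sin (a * u))) := by
  have hc : 0 < c := (abs_nonneg a).trans_lt h
  set F : ℕ → ℝ → ℝ := fun k u =>
    (-1) ^ k * a ^ (2 * k + 1) / (2 * k + 1)! * (u ^ (n + 2 * k + 1) * Real.exp (-(c * u)))
  have hF_int (k : ℕ) : IntegrableOn (F k) (Ioi 0) :=
    (integrableOn_pow_mul_exp_neg_mul_Ioi hc _).const_mul _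
  have hF_norm (k : ℕ) : ∫ u in Ioi 0, ‖F k u‖ =
      |a| ^ (2 * k + 1) / (2 * k + 1)! * ((n + 2 * k + 1)! / c ^ (n + 2 * k + 2)) := by
    rw [← integral_pow_mul_exp_neg_mul_Ioi hc, ← integral_const_mul]
    refine setIntegral_congr_fun measurableSet_Ioi fun u (hu : 0 < u) => ?_
    simp [F, abs_of_pos hu]
  have hF_sum (u : ℝ) : ∑' k, F k u = Real.exp (-(c * u)) * (u ^ n * Real.sin (a * u)) := by
    refine (((Real.hasSum_sin (a * u)).mul_left (u ^ n * Real.exp (-(c * u)))).congr_fun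
      fun k => ?_).tsum_eq.trans (by ring)
    simp only [F]
    ring
  have hF_summable : Summable fun k => ∫ u in Ioi 0, ‖F k u‖ := by
    simpa only [hF_norm] using
      summable_pow_div_factorial_mul_factorial_div_pow (abs_nonneg a) h n
  have key := hasSum_integral_of_summable_integral_norm hF_int hF_summable
  simp only [hF_sum] at key
  refine key.congr_fun fun k => ?_
  simp only [F]
  rw [integral_const_mul, integral_pow_mul_exp_neg_mul_Ioi hc]

lemma integral_comp_rpow_mul_rpow_sub_one_Ioi (g : ℝ → ℝ) {α : ℝ} (hα : 0 < α) :
    ∫ t in Ioi 0, g (t ^ α) * t ^ (α - 1) = α⁻¹ * ∫ u in Ioi 0, g u := by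
  rw [← integral_comp_rpow_Ioi g hα.ne', ← integral_const_mul]
  refine setIntegral_congr_fun measurableSet_Ioi fun t _ => ?_
  rw [smul_eq_mul, abs_of_pos hα]
  field_simp

theorem stmt19 (α : ℝ) (hα : α ∈ Set.Ioc (0:ℝ) 1) (a : ℝ) (n : ℕ) (s : ℝ)
    (hs : 0 < s) (h1 : (α * a / s) ^ 2 < 1) :
    ∫ t in Set.Ioi (0:ℝ),
        Real.exp (-s * t ^ α / α) * (t ^ (α * n) * Real.sin (a * t ^ α)) * t ^ (α - 1)
      = (a * α ^ (n + 1) * Real.Gamma ((n : ℝ) + 2) / s ^ (n + 2))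
        * F21 (((n : ℝ) + 2) / 2) (((n : ℝ) + 3) / 2) (3 / 2) (-(α * a / s) ^ 2) := by
  obtain ⟨hα0, -⟩ := hα
  have hac : |a| < s / α := by
    have h := (sq_lt_one_iff_abs_lt_one _).mp h1
    rw [abs_div, abs_mul, abs_of_pos hα0, abs_of_pos hs, div_lt_one hs] at h
    rw [lt_div_iff₀ hα0]
    linarith
  have hsubst : ∫ t in Ioi 0,
        Real.exp (-s * t ^ α / α) * (t ^ (α * n) * Real.sin (a * t ^ α)) * t ^ (α - 1)
      = α⁻¹ * ∫ u in Ioi 0, Real.exp (-(s / α * u)) * (u ^ n * Real.sin (a * u)) := by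
    rw [← integral_comp_rpow_mul_rpow_sub_one_Ioi _ hα0]
    refine setIntegral_congr_fun measurableSet_Ioi fun t (ht : 0 < t) => ?_
    rw [Real.rpow_mul ht.le, Real.rpow_natCast, neg_mul, neg_div, mul_div_right_comm]
  have hGamma : Real.Gamma ((n : ℝ) + 2) = (n + 1)! := by
    rw [show (n : ℝ) + 2 = (n + 1 : ℕ) + 1 by push_cast; ring, Real.Gamma_nat_eq_factorial]
  rw [hsubst, ← (hasSum_integral_exp_neg_mul_mul_pow_mul_sin hac n).tsum_eq, ← tsum_mul_left,
    F21, ← tsum_mul_left, hGamma]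
  refine tsum_congr fun k => ?_
  have hfact : ((n + 2 * k + 1)! : ℝ) = (2 * k + 1)! * ((n + 2 * k + 1)! / (2 * k + 1)!) := by
    field_simp
  have hpoch := poch_pos (by norm_num : (0 : ℝ) < 3 / 2) k
  rw [hfact, factorial_div_factorial_eq_poch, neg_pow ((α * a / s) ^ 2)]
  simp only [div_pow, mul_pow]
  field_simp
  ring
end
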